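/- Fourier expansion identity: for every n ∈ ℕ, t ≥ 0 and θ ∈ ℝ, U_n((1−e^{−t}) + e^{−t}cos θ) = Λ_0^n(t) + 2∑_{k=1}^{n} Λ_k^n(t) cos kθ, where Λ_k^n(t) = e^{−kt} ∑_{j=0}^{n−k} P_j^{(2k,0)}(1−2e^{−t}). -/

import Mathlib

/-!
With `r = e^{-t}` and `x = 1 - r + r cos θ`, the recurrence `U_{n+2} = 2x U_{n+1} - U_n` and
`2 cos θ cos kθ = cos (k+1)θ + cos (k-1)θ` reduce the expansion to a recurrence in `n` for the
coefficients `Λ_k^n`, which is uniform in `k` once `Λ_{|k|}^n` is read as the coefficient of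
`cos kθ` for all `k ∈ ℤ`. That recurrence is a combination of contiguous relations of the Jacobi
polynomials `P_j^{(a,0)}`, which for integral `a` are Pascal's rule for the trinomial coefficients
`(j+a+s)! / (s! (j-s)! (a+s)!)` of `P_j^{(a,0)}(1 + 2u)` in `u`.
-/

open Finset Real
/-- Generalized binomial coefficient `a` choose `k`. -/
noncomputable def rbinom (a : ℝ) (k : ℕ) : ℝ :=
  (∏ i ∈ Finset.range k, (a - i)) / (k.factorial : ℝ)

/-- The Jacobi polynomial `P_j^{(α,β)}(x)` via the standard explicit formula. -/
noncomputable def jacobi (α β : ℝ) (j : ℕ) (x : ℝ) : ℝ :=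
  ∑ m ∈ Finset.range (j + 1),
    rbinom ((j : ℝ) + α) (j - m) * rbinom ((j : ℝ) + β) m *
      ((x - 1) / 2) ^ m * ((x + 1) / 2) ^ (j - m)

open Polynomial

lemma rbinom_natCast (N k : ℕ) : rbinom N k = N.choose k := by
  rw [rbinom, ← descPochhammer_eval_eq_prod_range, Nat.cast_choose_eq_descPochhammer_div]

-- The trinomial coefficient `(j+a+s)! / (s! (j-s)! (a+s)!)` (zero for `s > j`).
def jacobiCoeff (a j s : ℕ) : ℕ := j.choose s * (j + a + s).choose j

lemma jacobiCoeff_eq_zero_of_lt {a j s : ℕ} (h : j < s) : jacobiCoeff a j s = 0 := by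
  simp [jacobiCoeff, Nat.choose_eq_zero_of_lt h]

lemma jacobiCoeff_succ_succ (a j s : ℕ) :
    jacobiCoeff (a + 1) (j + 1) s =
      jacobiCoeff a (j + 1) s + (j + 1).choose s * (j + a + s + 1).choose j := by
  simp only [jacobiCoeff, show j + 1 + (a + 1) + s = j + a + s + 1 + 1 by omega,
    Nat.choose_succ_succ (j + a + s + 1) j, show j + 1 + a + s = j + a + s + 1 by omega]
  ring

lemma choose_succ_mul_choose_eq_jacobiCoeff_add (a j s : ℕ) :
    (j + 1).choose (s + 1) * (j + a + (s + 1) + 1).choose j =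
      jacobiCoeff (a + 1) j (s + 1) + jacobiCoeff (a + 2) j s := by
  simp only [jacobiCoeff, Nat.choose_succ_succ j s,
    show j + (a + 1) + (s + 1) = j + a + (s + 1) + 1 by omega,
    show j + (a + 2) + s = j + a + (s + 1) + 1 by omega]
  ring

lemma choose_succ_mul_choose_succ (j s : ℕ) :
    (j + 1).choose (s + 1) * (j + s + 1).choose (j + 1) = j.choose s * (j + s + 1).choose j := by
  have h1 := Nat.choose_mul (n := j + s + 1) (k := j + 1) (s := j) (by omega)
  rw [Nat.choose_succ_self_right, show j + s + 1 - j = s + 1 by omega,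
      show j + 1 - j = 1 by omega, Nat.choose_one_right] at h1
  have h2 : (j + 1) * j.choose s = (j + 1).choose (s + 1) * (s + 1) :=
    Nat.add_one_mul_choose_eq j s
  zify at h1 h2 ⊢
  refine mul_left_cancel₀ (by positivity : ((j : ℤ) + 1) * ((s : ℤ) + 1) ≠ 0) ?_
  linear_combination ((s : ℤ) + 1) * ((j + 1).choose (s + 1) : ℤ) * h1
    - ((s : ℤ) + 1) * (((j + s + 1).choose j : ℕ) : ℤ) * h2

/-- `P_j^{(a,0)}(1 + 2X)`. -/
noncomputable def jacobiPoly (a j : ℕ) : ℝ[X] :=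
  ∑ s ∈ range (j + 1), C (jacobiCoeff a j s : ℝ) * X ^ s

lemma coeff_jacobiPoly (a j s : ℕ) : (jacobiPoly a j).coeff s = jacobiCoeff a j s := by
  simp only [jacobiPoly, finsetSum_coeff, coeff_C_mul_X_pow, sum_ite_eq, mem_range]
  split_ifs with h
  · rfl
  · rw [jacobiCoeff_eq_zero_of_lt (by omega), Nat.cast_zero]

@[simp]
lemma jacobiPoly_zero_right (a : ℕ) : jacobiPoly a 0 = 1 := by
  simp [jacobiPoly, jacobiCoeff]

lemma jacobiPoly_succ_succ (a j : ℕ) :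
    jacobiPoly (a + 1) (j + 1) =
      jacobiPoly a (j + 1) + jacobiPoly (a + 1) j + X * jacobiPoly (a + 2) j := by
  ext (_ | s) <;> simp only [coeff_add, coeff_X_mul, coeff_X_mul_zero, coeff_jacobiPoly] <;>
    norm_cast <;> rw [jacobiCoeff_succ_succ]
  · simp [jacobiCoeff, show j + (a + 1) = j + a + 1 by omega]
  · rw [choose_succ_mul_choose_eq_jacobiCoeff_add, add_assoc]

lemma jacobiCoeff_zero_succ_succ (j s : ℕ) :
    jacobiCoeff 0 (j + 1) (s + 1) = jacobiCoeff 0 j (s + 1) + 2 * jacobiCoeff 1 j s := by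
  rw [jacobiCoeff, show j + 1 + 0 + (s + 1) = j + s + 1 + 1 by omega,
    Nat.choose_succ_succ (j + s + 1) j, Nat.mul_add, choose_succ_mul_choose_succ,
    Nat.choose_succ_succ j s]
  simp only [jacobiCoeff, show j + 0 + (s + 1) = j + s + 1 by omega,
    show j + 1 + s = j + s + 1 by omega]
  ring

lemma jacobiPoly_zero_succ (j : ℕ) :
    jacobiPoly 0 (j + 1) = jacobiPoly 0 j + 2 * X * jacobiPoly 1 j := by
  ext (_ | s) <;> simp only [coeff_add, mul_comm (2 : ℝ[X]) X, mul_assoc, coeff_X_mul,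
    coeff_X_mul_zero, coeff_ofNat_mul, coeff_jacobiPoly]
  · simp [jacobiCoeff]
  · exact_mod_cast jacobiCoeff_zero_succ_succ j s

lemma choose_mul_ite_choose_sub (j m s : ℕ) :
    j.choose m * (if m ≤ s then (j - m).choose (s - m) else 0) = j.choose s * s.choose m := by
  split_ifs with hms
  · rw [Nat.choose_mul hms]
  · simp [Nat.choose_eq_zero_of_lt (by omega : s < m)]

lemma sum_choose_mul_eq_jacobiCoeff (a j s : ℕ) :
    ∑ m ∈ range (j + 1), (j + a).choose (j - m) * j.choose m *
      (if m ≤ s then (j - m).choose (s - m) else 0) = jacobiCoeff a j s := by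
  simp only [mul_assoc, choose_mul_ite_choose_sub, jacobiCoeff]
  rw [show j + a + s = s + (j + a) by omega, Nat.add_choose_eq,
    Nat.sum_antidiagonal_eq_sum_range_succ_mk, mul_sum]
  exact sum_congr rfl fun m _ => by ring

lemma jacobi_natCast_eq_eval (a j : ℕ) (x : ℝ) :
    jacobi a 0 j x = (jacobiPoly a j).eval ((x - 1) / 2) := by
  have hpoly : jacobiPoly a j = ∑ m ∈ range (j + 1),
      C (((j + a).choose (j - m) * j.choose m : ℕ) : ℝ) * X ^ m * (X + 1) ^ (j - m) := by
    ext s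
    simp only [coeff_jacobiPoly, finsetSum_coeff, mul_assoc, coeff_C_mul, coeff_X_pow_mul',
      coeff_X_add_one_pow]
    rw [← sum_choose_mul_eq_jacobiCoeff]
    push_cast
    refine sum_congr rfl fun m _ => ?_
    split_ifs <;> simp
  rw [hpoly, eval_finsetSum, jacobi]
  refine sum_congr rfl fun m _ => ?_
  rw [← Nat.cast_add, add_zero, rbinom_natCast, rbinom_natCast]
  simp only [eval_mul, eval_C, eval_pow, eval_X, eval_add, eval_one]
  push_cast
  ring

noncomputable def jacobiPolySum (a m : ℕ) : ℝ[X] := ∑ j ∈ range m, jacobiPoly a j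

@[simp]
lemma jacobiPolySum_zero (a : ℕ) : jacobiPolySum a 0 = 0 := by simp [jacobiPolySum]

@[simp]
lemma jacobiPolySum_one (a : ℕ) : jacobiPolySum a 1 = 1 := by simp [jacobiPolySum]

lemma jacobiPolySum_succ_succ (a m : ℕ) :
    jacobiPolySum (a + 1) (m + 1) =
      jacobiPolySum a (m + 1) + jacobiPolySum (a + 1) m + X * jacobiPolySum (a + 2) m := by
  simp only [jacobiPolySum, sum_range_succ', jacobiPoly_succ_succ, sum_add_distrib, mul_sum,
    jacobiPoly_zero_right]
  ring

lemma jacobiPolySum_zero_succ (m : ℕ) :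
    jacobiPolySum 0 (m + 1) = jacobiPolySum 0 m + 2 * X * jacobiPolySum 1 m + 1 := by
  simp only [jacobiPolySum, sum_range_succ', jacobiPoly_zero_succ, sum_add_distrib, mul_sum,
    jacobiPoly_zero_right]

lemma jacobiPolySum_add_two_add_two (a m : ℕ) :
    jacobiPolySum (a + 2) (m + 2) + jacobiPolySum (a + 2) m =
      2 * (1 + X) * jacobiPolySum (a + 2) (m + 1) + jacobiPolySum a (m + 2) +
        X ^ 2 * jacobiPolySum (a + 4) m := by
  linear_combination jacobiPolySum_succ_succ (a + 1) (m + 1) + jacobiPolySum_succ_succ a (m + 1) +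
    X * jacobiPolySum_succ_succ (a + 2) m - jacobiPolySum_succ_succ (a + 1) m

lemma jacobiPolySum_zero_add_two (m : ℕ) :
    jacobiPolySum 0 (m + 2) + jacobiPolySum 0 m =
      2 * (1 + X) * jacobiPolySum 0 (m + 1) + 2 * X ^ 2 * jacobiPolySum 2 m := by
  linear_combination jacobiPolySum_zero_succ (m + 1) + 2 * X * jacobiPolySum_succ_succ 0 m -
    jacobiPolySum_zero_succ m

/-- `Λ_k^n(t)` with `r = e^{-t}`; the truncated subtraction makes it vanish for `k > n`. -/
noncomputable def weinsteinCoeff (r : ℝ) (n k : ℕ) : ℝ :=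
  r ^ k * (jacobiPolySum (2 * k) (n + 1 - k)).eval (-r)

lemma weinsteinCoeff_of_lt {r : ℝ} {n k : ℕ} (h : n < k) : weinsteinCoeff r n k = 0 := by
  simp [weinsteinCoeff, Nat.sub_eq_zero_of_le h]

lemma weinsteinCoeff_self (r : ℝ) (n : ℕ) : weinsteinCoeff r n n = r ^ n := by
  simp [weinsteinCoeff]

lemma weinsteinCoeff_add_two_succ (r : ℝ) (n k : ℕ) :
    weinsteinCoeff r (n + 2) (k + 1) =
      2 * (1 - r) * weinsteinCoeff r (n + 1) (k + 1) +
        r * (weinsteinCoeff r (n + 1) k + weinsteinCoeff r (n + 1) (k + 2)) -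
          weinsteinCoeff r n (k + 1) := by
  rcases le_or_gt k n with hkn | hnk
  · obtain ⟨m, rfl⟩ := Nat.exists_eq_add_of_le hkn
    have h := congrArg (eval (-r)) (jacobiPolySum_add_two_add_two (2 * k) m)
    simp only [eval_add, eval_mul, eval_pow, eval_X, eval_ofNat, eval_one] at h
    simp only [weinsteinCoeff, show 2 * (k + 1) = 2 * k + 2 by ring,
      show 2 * (k + 2) = 2 * k + 4 by ring,
      show k + m + 2 + 1 - (k + 1) = m + 2 by omega, show k + m + 1 + 1 - (k + 1) = m + 1 by omega,
      show k + m + 1 + 1 - k = m + 2 by omega, show k + m + 1 + 1 - (k + 2) = m by omega,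
      show k + m + 1 - (k + 1) = m by omega]
    linear_combination r ^ (k + 1) * h
  · rcases Nat.lt_or_ge (n + 1) k with hnk' | hkn'
    · simp only [weinsteinCoeff_of_lt (by omega : n + 2 < k + 1),
        weinsteinCoeff_of_lt (by omega : n + 1 < k + 1),
        weinsteinCoeff_of_lt (by omega : n + 1 < k),
        weinsteinCoeff_of_lt (by omega : n + 1 < k + 2),
        weinsteinCoeff_of_lt (by omega : n < k + 1)]
      ring
    · obtain rfl : k = n + 1 := by omega
      simp only [weinsteinCoeff_self, weinsteinCoeff_of_lt (by omega : n + 1 < n + 1 + 1),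
        weinsteinCoeff_of_lt (by omega : n + 1 < n + 1 + 2),
        weinsteinCoeff_of_lt (by omega : n < n + 1 + 1)]
      ring

lemma weinsteinCoeff_add_two_zero (r : ℝ) (n : ℕ) :
    weinsteinCoeff r (n + 2) 0 =
      2 * (1 - r) * weinsteinCoeff r (n + 1) 0 + 2 * r * weinsteinCoeff r (n + 1) 1 -
        weinsteinCoeff r n 0 := by
  have h := congrArg (eval (-r)) (jacobiPolySum_zero_add_two (n + 1))
  simp only [eval_add, eval_mul, eval_pow, eval_X, eval_ofNat, eval_one] at h
  simp only [weinsteinCoeff, Nat.sub_zero, pow_zero, one_mul, pow_one, mul_zero, mul_one,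
    show n + 1 + 1 - 1 = n + 1 by omega]
  linear_combination h

lemma weinsteinCoeff_natAbs_add_two (r : ℝ) (n : ℕ) (k : ℤ) :
    weinsteinCoeff r (n + 2) k.natAbs =
      2 * (1 - r) * weinsteinCoeff r (n + 1) k.natAbs +
        r * (weinsteinCoeff r (n + 1) (k - 1).natAbs + weinsteinCoeff r (n + 1) (k + 1).natAbs) -
          weinsteinCoeff r n k.natAbs := by
  rcases k with (_ | m) | m
  · rw [Int.ofNat_eq_natCast, Nat.cast_zero, zero_sub, zero_add, Int.natAbs_neg, Int.natAbs_one,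
      Int.natAbs_zero, weinsteinCoeff_add_two_zero]
    ring
  · rw [Int.ofNat_eq_natCast, show ((m + 1 : ℕ) : ℤ).natAbs = m + 1 by omega,
      show ((m + 1 : ℕ) - 1 : ℤ).natAbs = m by omega,
      show ((m + 1 : ℕ) + 1 : ℤ).natAbs = m + 2 by omega, weinsteinCoeff_add_two_succ]
  · rw [show (Int.negSucc m).natAbs = m + 1 by omega,
      show (Int.negSucc m - 1).natAbs = m + 2 by omega,
      show (Int.negSucc m + 1).natAbs = m by omega, weinsteinCoeff_add_two_succ]
    ring

lemma HasSum.neighbour_sum_mul_cos {f : ℤ → ℝ} (hf : (Function.support f).Finite) {θ s : ℝ}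
    (hs : HasSum (fun k : ℤ => f k * cos (k * θ)) s) :
    HasSum (fun k : ℤ => (f (k - 1) + f (k + 1)) * cos (k * θ)) (2 * cos θ * s) := by
  have summable (g : ℤ → ℝ) : Summable fun k => f k * g k :=
    summable_of_hasFiniteSupport (hf.subset (Function.support_mul_subset_left _ _))
  have hup : HasSum (fun k : ℤ => f (k - 1) * cos (k * θ))
      (∑' k : ℤ, f k * cos ((k + 1 : ℤ) * θ)) := by
    rw [← (Equiv.addRight (1 : ℤ)).hasSum_iff]
    convert (summable _).hasSum using 2 with k
    simp
  have hdown : HasSum (fun k : ℤ => f (k + 1) * cos (k * θ))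
      (∑' k : ℤ, f k * cos ((k - 1 : ℤ) * θ)) := by
    rw [← (Equiv.subRight (1 : ℤ)).hasSum_iff]
    convert (summable _).hasSum using 2 with k
    simp
  have hsplit : ∑' k : ℤ, f k * cos ((k + 1 : ℤ) * θ) + ∑' k : ℤ, f k * cos ((k - 1 : ℤ) * θ) =
      2 * cos θ * s := by
    have hprod : (fun k : ℤ => f k * cos ((k + 1 : ℤ) * θ) + f k * cos ((k - 1 : ℤ) * θ)) =
        fun k : ℤ => 2 * cos θ * (f k * cos (k * θ)) := by
      funext k
      push_cast
      rw [add_mul, sub_mul, one_mul, cos_add, cos_sub]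
      ring
    refine ((summable _).hasSum.add (summable _).hasSum).unique ?_
    rw [hprod]
    exact hs.mul_left _
  rw [← hsplit]
  convert hup.add hdown using 2 with k
  ring

lemma finite_support_comp_natAbs {g : ℕ → ℝ} {n : ℕ} (hg : ∀ k, n < k → g k = 0) :
    (Function.support fun k : ℤ => g k.natAbs).Finite := by
  refine (Set.finite_Icc (-(n : ℤ)) n).subset fun k hk => ?_
  by_contra hkn
  rw [Set.mem_Icc] at hkn
  exact hk (hg _ (by omega))

lemma hasSum_comp_natAbs_mul_cos {g : ℕ → ℝ} {n : ℕ} (hg : ∀ k, n < k → g k = 0) (θ : ℝ) :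
    HasSum (fun k : ℤ => g k.natAbs * cos (k * θ))
      (g 0 + 2 * ∑ k ∈ Icc 1 n, g k * cos (k * θ)) := by
  set F := fun k : ℤ => g k.natAbs * cos (k * θ)
  have hF : Summable F := summable_of_hasFiniteSupport
    ((finite_support_comp_natAbs hg).subset (Function.support_mul_subset_left _ _))
  have heven : F.Even := fun k => by simp [F, cos_neg]
  convert hF.hasSum using 1
  rw [tsum_int_eq_zero_add_two_mul_tsum_pnat heven hF,
    tsum_pnat_eq_tsum_succ (f := fun m : ℕ => F m),
    tsum_eq_sum (s := range n) fun k hk => by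
      simp only [F, Int.natAbs_natCast, hg (k + 1) (by simpa using hk), zero_mul],
    ← Ico_add_one_right_eq_Icc, sum_Ico_eq_sum_range, Nat.add_sub_cancel]
  simp only [F, Int.natAbs_natCast]
  simp [add_comm]

theorem hasSum_chebyshevU_eval (r θ : ℝ) (n : ℕ) :
    HasSum (fun k : ℤ => weinsteinCoeff r n k.natAbs * cos (k * θ))
      ((Chebyshev.U ℝ n).eval (1 - r + r * cos θ)) := by
  have hvanish (n : ℕ) : ∀ k, n < k → weinsteinCoeff r n k = 0 := fun _ => weinsteinCoeff_of_lt
  induction n using Nat.twoStepInduction with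
  | zero =>
    convert hasSum_comp_natAbs_mul_cos (hvanish 0) θ using 1
    simp [weinsteinCoeff]
  | one =>
    convert hasSum_comp_natAbs_mul_cos (hvanish 1) θ using 1
    simp only [Nat.cast_one, Chebyshev.U_one, eval_mul, eval_ofNat, eval_X, weinsteinCoeff,
      pow_zero, mul_zero, Nat.reduceAdd, tsub_zero, jacobiPolySum_zero_succ, jacobiPolySum_one,
      mul_one, eval_add, eval_one, mul_neg, one_mul, Icc_self, sum_singleton, pow_one,
      Nat.add_one_sub_one]
    ring
  | more n ih₀ ih₁ =>
    have h := ((ih₁.mul_left (2 * (1 - r))).add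
      ((ih₁.neighbour_sum_mul_cos (finite_support_comp_natAbs (hvanish _))).mul_left r)).sub ih₀
    have hcoeff (k : ℤ) : weinsteinCoeff r (n + 2) k.natAbs * cos (k * θ) =
        2 * (1 - r) * (weinsteinCoeff r (n + 1) k.natAbs * cos (k * θ)) +
          r * ((weinsteinCoeff r (n + 1) (k - 1).natAbs +
            weinsteinCoeff r (n + 1) (k + 1).natAbs) * cos (k * θ)) -
          weinsteinCoeff r n k.natAbs * cos (k * θ) := by
      rw [weinsteinCoeff_natAbs_add_two]
      ring
    have hU : (Chebyshev.U ℝ (n + 2 : ℕ)).eval (1 - r + r * cos θ) =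
        2 * (1 - r) * (Chebyshev.U ℝ (n + 1 : ℕ)).eval (1 - r + r * cos θ) +
          r * (2 * cos θ * (Chebyshev.U ℝ (n + 1 : ℕ)).eval (1 - r + r * cos θ)) -
          (Chebyshev.U ℝ n).eval (1 - r + r * cos θ) := by
      rw [show ((n + 2 : ℕ) : ℤ) = n + 2 by push_cast; ring, Chebyshev.U_add_two]
      simp only [eval_sub, eval_mul, eval_X, eval_ofNat, Nat.cast_add, Nat.cast_one]
      ring
    simp only [hcoeff, hU]
    exact h

theorem weinstein_fourier_expansion_general (n : ℕ) (t : ℝ) (θ : ℝ) :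
    (Polynomial.Chebyshev.U ℝ n).eval ((1 - Real.exp (-t)) + Real.exp (-t) * Real.cos θ) =
      (Real.exp (-(0 : ℝ) * t) *
          ∑ j ∈ Finset.range (n - 0 + 1), jacobi (2 * 0) 0 j (1 - 2 * Real.exp (-t))) +
        2 * ∑ k ∈ Finset.Icc 1 n,
          (Real.exp (-(k : ℝ) * t) *
              ∑ j ∈ Finset.range (n - k + 1), jacobi (2 * k) 0 j (1 - 2 * Real.exp (-t))) *
            Real.cos (k * θ) := by
  have hΛ (k : ℕ) (hk : k ≤ n) : exp (-(k : ℝ) * t) *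
      ∑ j ∈ range (n - k + 1), jacobi (2 * k) 0 j (1 - 2 * exp (-t)) =
        weinsteinCoeff (exp (-t)) n k := by
    rw [weinsteinCoeff, jacobiPolySum, eval_finsetSum, show n - k + 1 = n + 1 - k by omega,
      show -(k : ℝ) * t = k * -t by ring, exp_nat_mul]
    congr 1
    refine sum_congr rfl fun j _ => ?_
    rw [show (2 * k : ℝ) = (2 * k : ℕ) by push_cast; ring, jacobi_natCast_eq_eval]
    ring_nf
  rw [(hasSum_chebyshevU_eval (exp (-t)) θ n).unique
    (hasSum_comp_natAbs_mul_cos (fun _ => weinsteinCoeff_of_lt) θ)]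
  congr 1
  · simpa using (hΛ 0 n.zero_le).symm
  · exact congrArg (2 * ·) (sum_congr rfl fun k hk => by rw [hΛ k (mem_Icc.1 hk).2])

/-- Fourier expansion of the Weinstein functions:
`U_n((1-e^{-t}) + e^{-t}cos θ) = Λ₀ⁿ(t) + 2∑_{k=1}^n Λ_kⁿ(t) cos kθ`, where
`Λ_kⁿ(t) = e^{-kt} ∑_{j=0}^{n-k} P_j^{(2k,0)}(1-2e^{-t})`. -/
theorem weinstein_fourier_expansion (n : ℕ) (t : ℝ) (ht : 0 ≤ t) (θ : ℝ) :
    (Polynomial.Chebyshev.U ℝ n).eval ((1 - Real.exp (-t)) + Real.exp (-t) * Real.cos θ) =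
      (Real.exp (-(0 : ℝ) * t) *
          ∑ j ∈ Finset.range (n - 0 + 1), jacobi (2 * 0) 0 j (1 - 2 * Real.exp (-t))) +
        2 * ∑ k ∈ Finset.Icc 1 n,
          (Real.exp (-(k : ℝ) * t) *
              ∑ j ∈ Finset.range (n - k + 1), jacobi (2 * k) 0 j (1 - 2 * Real.exp (-t))) *
            Real.cos (k * θ) :=
  weinstein_fourier_expansion_general n t θ
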